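/- arXiv:2107.11603 — 3 statements merged into one kernel-verified Lean document; each statement's English description precedes it below -/
import Mathlib

section
/- If A is a bounded normal operator on a complex Hilbert space H and X is a bounded operator on H such that the s-fold iterated commutator ad_A^s(X) = 0 for some positive integer s, then AX = XA. -/
/-! Put `y = ⁅A, X⁆`. Descending along the iterates, it suffices to show that `y` commuting with
`A` forces `y = 0`. By Fuglede's theorem `star y` commutes with `A` as well, so `star y * y` equals
`⁅A, star y * X⁆` and commutes with `A`. For any `t = ⁅a, w⁆` commuting with `a`, the Leibniz rule
gives `ad_a^n (w ^ n) = n! • t ^ n` (Kleinecke–Shirokov), hence `n! ‖t ^ n‖ ≤ (2 ‖a‖ ‖w‖) ^ n`.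
When `t` is self-adjoint, `‖t ^ 2 ^ k‖ = ‖t‖ ^ 2 ^ k`, and the factorial growth forces `t = 0`.
Thus `star y * y = 0`, i.e. `y = 0`. -/

open Filter
open scoped Nat

theorem Function.apply_eq_of_iterate_eq {α : Type*} {f : α → α} {c x : α}
    (hf : ∀ y, f (f y) = c → f y = c) : ∀ {n : ℕ}, 0 < n → f^[n] x = c → f x = c
  | 1, _, h => h
  | n + 2, _, h => by
    rw [iterate_succ_apply', iterate_succ_apply'] at h
    exact apply_eq_of_iterate_eq hf n.succ_pos (by rw [iterate_succ_apply']; exact hf _ h)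

theorem eq_zero_of_frequently_factorial_mul_pow_le {t C : ℝ} (ht : 0 ≤ t)
    (h : ∃ᶠ n in atTop, (n ! : ℝ) * t ^ n ≤ C ^ n) : t = 0 := by
  by_contra hne
  have htpos : 0 < t := lt_of_le_of_ne ht (Ne.symm hne)
  have hsmall : ∀ᶠ n in atTop, (C / t) ^ n / n ! < 1 :=
    (FloorSemiring.tendsto_pow_div_factorial_atTop (C / t)).eventually (gt_mem_nhds one_pos)
  obtain ⟨n, hle, hlt⟩ := (h.and_eventually hsmall).exists
  rw [div_pow, div_div, div_lt_one (by positivity), mul_comm] at hlt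
  exact hle.not_gt hlt

section NonUnitalRing

variable {R : Type*} [NonUnitalRing R]

theorem lie_mul_eq (a u v : R) : ⁅a, u * v⁆ = ⁅a, u⁆ * v + u * ⁅a, v⁆ := by
  simp only [Ring.lie_def]
  noncomm_ring

theorem iterate_lie_add (a u v : R) (n : ℕ) :
    (⁅a, ·⁆)^[n] (u + v) = (⁅a, ·⁆)^[n] u + (⁅a, ·⁆)^[n] v := by
  induction n with
  | zero => rfl
  | succ n ih =>
    rw [Function.iterate_succ_apply', Function.iterate_succ_apply', Function.iterate_succ_apply',
      ih, Ring.lie_def, Ring.lie_def, Ring.lie_def, mul_add, add_mul]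
    abel

theorem Commute.iterate_lie_mul_left {a t : R} (h : Commute a t) (u : R) (n : ℕ) :
    (⁅a, ·⁆)^[n] (t * u) = t * (⁅a, ·⁆)^[n] u := by
  induction n with
  | zero => rfl
  | succ n ih =>
    rw [Function.iterate_succ_apply', ih, lie_mul_eq, h.lie_eq, zero_mul, zero_add,
      Function.iterate_succ_apply']

theorem iterate_succ_lie_mul {a w : R} (h : Commute a ⁅a, w⁆) (v : R) (n : ℕ) :
    (⁅a, ·⁆)^[n + 1] (w * v) =
      w * (⁅a, ·⁆)^[n + 1] v + (n + 1) • (⁅a, w⁆ * (⁅a, ·⁆)^[n] v) := by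
  induction n generalizing v with
  | zero => simp [lie_mul_eq, add_comm]
  | succ n ih =>
    rw [Function.iterate_succ_apply, lie_mul_eq, iterate_lie_add, h.iterate_lie_mul_left, ih,
      ← Function.iterate_succ_apply, ← Function.iterate_succ_apply, succ_nsmul _ (n + 1)]
    abel

end NonUnitalRing

theorem iterate_lie_pow {R : Type*} [Ring R] {a w : R} (h : Commute a ⁅a, w⁆) (n : ℕ) :
    (⁅a, ·⁆)^[n] (w ^ n) = n ! • ⁅a, w⁆ ^ n := by
  induction n with
  | zero => simp
  | succ n ih =>
    rw [pow_succ', iterate_succ_lie_mul h, Function.iterate_succ_apply', ih,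
      ((h.pow_right n).smul_right _).lie_eq, mul_zero, zero_add, mul_smul_comm, smul_smul,
      ← pow_succ', Nat.factorial_succ]

section NormedRing

theorem norm_lie_le {R : Type*} [NonUnitalNormedRing R] (a u : R) :
    ‖⁅a, u⁆‖ ≤ 2 * ‖a‖ * ‖u‖ :=
  calc ‖a * u - u * a‖ ≤ ‖a * u‖ + ‖u * a‖ := norm_sub_le _ _
    _ ≤ ‖a‖ * ‖u‖ + ‖u‖ * ‖a‖ := add_le_add (norm_mul_le _ _) (norm_mul_le _ _)
    _ = 2 * ‖a‖ * ‖u‖ := by ring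

theorem norm_iterate_lie_le {R : Type*} [NonUnitalNormedRing R] (a u : R) (n : ℕ) :
    ‖(⁅a, ·⁆)^[n] u‖ ≤ (2 * ‖a‖) ^ n * ‖u‖ := by
  induction n generalizing u with
  | zero => simp
  | succ n ih =>
    calc ‖(⁅a, ·⁆)^[n] ⁅a, u⁆‖ ≤ (2 * ‖a‖) ^ n * ‖⁅a, u⁆‖ := ih _
      _ ≤ (2 * ‖a‖) ^ n * (2 * ‖a‖ * ‖u‖) := by grw [norm_lie_le]
      _ = (2 * ‖a‖) ^ (n + 1) * ‖u‖ := by ring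

variable {R : Type*} [NormedRing R] [NormedSpace ℝ R]

theorem factorial_mul_norm_lie_pow_le {a w : R} (h : Commute a ⁅a, w⁆) {n : ℕ} (hn : 0 < n) :
    (n ! : ℝ) * ‖⁅a, w⁆ ^ n‖ ≤ (2 * ‖a‖ * ‖w‖) ^ n :=
  calc (n ! : ℝ) * ‖⁅a, w⁆ ^ n‖ = ‖(⁅a, ·⁆)^[n] (w ^ n)‖ := by
        rw [iterate_lie_pow h, RCLike.norm_nsmul ℝ, nsmul_eq_mul]
    _ ≤ (2 * ‖a‖) ^ n * ‖w‖ ^ n := by grw [norm_iterate_lie_le, norm_pow_le' _ hn]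
    _ = (2 * ‖a‖ * ‖w‖) ^ n := by ring

theorem IsSelfAdjoint.lie_eq_zero_of_commute [StarRing R] [CStarRing R] {a w : R}
    (hsa : IsSelfAdjoint ⁅a, w⁆) (h : Commute a ⁅a, w⁆) : ⁅a, w⁆ = 0 := by
  have hbound : ∃ᶠ n in atTop, (n ! : ℝ) * ‖⁅a, w⁆‖ ^ n ≤ (2 * ‖a‖ * ‖w‖) ^ n :=
    (tendsto_pow_atTop_atTop_of_one_lt one_lt_two).frequently <| .of_forall fun k => by
      rw [← hsa.norm_pow_two_pow]
      exact factorial_mul_norm_lie_pow_le h (by positivity)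
  exact norm_eq_zero.mp (eq_zero_of_frequently_factorial_mul_pow_le (norm_nonneg _) hbound)

end NormedRing

theorem IsStarNormal.commute_of_commute_lie {𝔸 : Type*} [CStarAlgebra 𝔸] {a x : 𝔸}
    (ha : IsStarNormal a) (h : Commute a ⁅a, x⁆) : Commute a x := by
  set y := ⁅a, x⁆
  have hstar : Commute a (star y) := by simpa using (ha.commute_star_left h).star_star
  have hyy : star y * y = ⁅a, star y * x⁆ := by
    rw [lie_mul_eq, hstar.lie_eq, zero_mul, zero_add]
  have hzero : ⁅a, star y * x⁆ = 0 :=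
    IsSelfAdjoint.lie_eq_zero_of_commute (hyy ▸ .star_mul_self y) (hyy ▸ hstar.mul_right h)
  exact commute_iff_lie_eq.mpr ((CStarRing.star_mul_self_eq_zero_iff y).mp (hyy.trans hzero))

theorem stmt0 {H : Type*} [NormedAddCommGroup H] [InnerProductSpace ℂ H]
    [CompleteSpace H] (A X : H →L[ℂ] H) (hA : A * star A = star A * A)
    (s : ℕ) (hs : 0 < s)
    (h : (fun Y => A * Y - Y * A)^[s] X = 0) : A * X = X * A := by
  have hnormal : IsStarNormal A := ⟨hA.symm⟩
  refine commute_iff_lie_eq.mpr (Function.apply_eq_of_iterate_eq (fun y hy => ?_) hs h)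
  exact (hnormal.commute_of_commute_lie (commute_iff_lie_eq.mpr hy)).lie_eq
end

section
/- Let A be a bounded operator on a complex Hilbert space that decomposes as A = S + N where S is normal, N is nilpotent with N^{m+1} = 0, SN = NS, and every bounded operator commuting with A also commutes with S. Then for every integer s ≥ 2m+1, C_s(C_s(A)) ⊆ C_1(C_1(A)); in particular C_s(C_s(A)) is contained in the von Neumann algebra generated by A and the identity. -/
/-!
Let `Y` commute with `A = S + N`. By hypothesis `Y` commutes with `S`, so by Fuglede's theorem
also with `S*`; hence the real and imaginary parts of `Y` commute with `S`. Anything commuting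
with `S` is killed by `ad_A ^ s = (ad_S + ad_N) ^ s`, because `ad_N ^ (2m+1) = 0`. So for `B` in
the `s`-bicommutant, `ad_X ^ s B = 0` with `X = ℜ Y` or `ℑ Y` self-adjoint, and a downward
induction reduces this to `ad_X ^ 2 C = 0 ⇒ ad_X C = 0`. For the latter, conjugating `C` by the
unitaries `exp (i t X)` gives `C + i t ⁅X, C⁆`, whose norm stays `‖C‖` for all real `t`.
-/

/-- The `s`-centralizer of a set of bounded operators. -/
def sCentralizer {H : Type*} [NormedAddCommGroup H] [InnerProductSpace ℂ H]
    [CompleteSpace H] (s : ℕ) (S : Set (H →L[ℂ] H)) : Set (H →L[ℂ] H) :=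
  {X | ∀ Y ∈ S, (fun Z => Y * Z - Z * Y)^[s] X = 0}

/-- The von Neumann algebra generated by `A` and the identity, realized via the
double commutant theorem as the double commutant of `{A, A*}`. -/
def vN {H : Type*} [NormedAddCommGroup H] [InnerProductSpace ℂ H]
    [CompleteSpace H] (A : H →L[ℂ] H) : Set (H →L[ℂ] H) :=
  Set.centralizer (Set.centralizer {A, star A})

attribute [local instance] LieRing.ofAssociativeRing LieAlgebra.ofAssociativeAlgebra

open LieAlgebra NormedSpace
open scoped ComplexStarModule

theorem Commute.add_pow_apply_of_apply_eq_zero {R M : Type*} [Semiring R] [AddCommMonoid M]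
    [Module R M] {f g : Module.End R M} (h : Commute f g) {x : M} (hx : f x = 0) (n : ℕ) :
    ((f + g) ^ n) x = (g ^ n) x := by
  induction n with
  | zero => rfl
  | succ n ih =>
    rw [pow_succ', Module.End.mul_apply, ih, LinearMap.add_apply, ← Module.End.mul_apply f,
      (h.pow_right n).eq, Module.End.mul_apply, hx, map_zero, zero_add, pow_succ',
      Module.End.mul_apply]

section Algebraic

variable {R A : Type*} [CommRing R] [Ring A] [Algebra R A]

theorem LieAlgebra.ad_pow_eq_zero_of_pow_eq_zero {N : A} {n s : ℕ} (hN : N ^ n = 0)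
    (hs : 2 * n ≤ s + 1) : ad R A N ^ s = 0 := by
  rw [congr_fun (ad_eq_lmul_left_sub_lmul_right (R := R) A) N, Pi.sub_apply, sub_eq_add_neg]
  refine (LinearMap.commute_mulLeft_right (R := R) N N).neg_right
    |>.add_pow_eq_zero_of_add_le_succ_of_pow_eq_zero (m := n) (n := n) ?_ ?_ (by omega)
  · rw [LinearMap.pow_mulLeft, hN, LinearMap.mulLeft_zero_eq_zero]
  · rw [neg_pow, LinearMap.pow_mulRight, hN, LinearMap.mulRight_zero_eq_zero, mul_zero]

theorem LieAlgebra.ad_pow_add_apply_eq_zero {S N X : A} {n s : ℕ} (hSN : Commute S N)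
    (hSX : Commute S X) (hN : N ^ n = 0) (hs : 2 * n ≤ s + 1) :
    (ad R A (S + N) ^ s) X = 0 := by
  have hSX' : ad R A S X = 0 := by rwa [ad_apply, ← commute_iff_lie_eq]
  rw [map_add, (commute_ad_of_commute hSN).add_pow_apply_of_apply_eq_zero hSX',
    ad_pow_eq_zero_of_pow_eq_zero hN hs, LinearMap.zero_apply]

end Algebraic

section RealImaginary

variable {A : Type*} [Ring A] [StarRing A] [Algebra ℂ A] [StarModule ℂ A]

theorem Commute.realPart_right {S Y : A} (h : Commute S Y) (h' : Commute S (star Y)) :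
    Commute S (ℜ Y : A) := by
  rw [realPart_apply_coe]
  exact (h.add_right h').smul_right _

theorem Commute.imaginaryPart_right {S Y : A} (h : Commute S Y) (h' : Commute S (star Y)) :
    Commute S (ℑ Y : A) := by
  rw [imaginaryPart_apply_coe]
  exact ((h.sub_right h').smul_right _).smul_right _

end RealImaginary

section Exponential

variable {𝕂 𝔸 : Type*} [RCLike 𝕂] [NormedRing 𝔸] [NormedAlgebra 𝕂 𝔸] [NormedAlgebra ℚ 𝔸]
  [CompleteSpace 𝔸]

theorem exp_smul_mul_mul_exp_neg_smul_of_commute_lie {X C : 𝔸} (h : Commute X ⁅X, C⁆) (z : 𝕂) :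
    exp (z • X) * C * exp (-(z • X)) = C + z • ⁅X, C⁆ := by
  set D := ⁅X, C⁆
  -- `G` has derivative `exp (-w X) (D - ⁅X, C + w D⁆) exp (w X) = 0`, since `⁅X, D⁆ = 0`.
  set G : 𝕂 → 𝔸 := fun w => exp (w • -X) * (C + w • D) * exp (w • X)
  have hG : ∀ w, HasDerivAt G 0 w := by
    intro w
    refine (((hasDerivAt_exp_smul_const' (-X) w).fun_mul
      (((hasDerivAt_id w).smul_const D).const_add C)).fun_mul
      (hasDerivAt_exp_smul_const X w)).congr_deriv ?_
    have hXe : Commute X (exp (w • -X)) := ((Commute.refl X).neg_right.smul_right w).exp_right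
    have hXe' : Commute X (exp (w • X)) := ((Commute.refl X).smul_right w).exp_right
    have hzero : -(X * (C + w • D)) + D + (C + w • D) * X = 0 := by
      rw [mul_add, add_mul, mul_smul_comm, smul_mul_assoc, h.eq]
      simp only [D, Ring.lie_def]
      abel
    calc _ = exp (w • -X) * (-(X * (C + w • D)) + D + (C + w • D) * X) * exp (w • X) := by
          rw [neg_mul, hXe.eq, ← hXe'.eq, id, one_smul]
          simp only [mul_add, add_mul, neg_mul, mul_neg, mul_assoc, mul_smul_comm, smul_mul_assoc,
            smul_neg]
          abel
      _ = 0 := by rw [hzero, mul_zero, zero_mul]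
  have hG0 : G z = C := by
    rw [is_const_of_deriv_eq_zero (fun w => (hG w).differentiableAt) (fun w => (hG w).deriv) z 0]
    simp [G]
  have hinv (Y : 𝔸) : exp Y * exp (-Y) = 1 := by
    rw [← exp_add_of_commute (Commute.refl Y).neg_right, add_neg_cancel, exp_zero]
  have hconj : exp (z • X) * G z * exp (-(z • X)) = C + z • D := by
    simp only [G, smul_neg, ← mul_assoc, hinv, one_mul]
    simp only [mul_assoc, hinv, mul_one]
  rwa [hG0] at hconj

end Exponential

section CStarAlgebra

open Complex

variable {𝔸 : Type*} [CStarAlgebra 𝔸]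

theorem IsSelfAdjoint.commute_of_commute_lie {X C : 𝔸} (hX : IsSelfAdjoint X)
    (h : Commute X ⁅X, C⁆) : Commute X C := by
  let _ : NormedAlgebra ℚ 𝔸 := .restrictScalars ℚ ℂ 𝔸
  have hbound (t : ℝ) : |t| * ‖⁅X, C⁆‖ ≤ 2 * ‖C‖ := by
    have hskew : ((t : ℂ) * I) • X ∈ skewAdjoint 𝔸 :=
      hX.smul_mem_skewAdjoint (by simp [skewAdjoint.mem_iff])
    have hnorm : ‖C + ((t : ℂ) * I) • ⁅X, C⁆‖ = ‖C‖ := by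
      rw [← exp_smul_mul_mul_exp_neg_smul_of_commute_lie h,
        CStarRing.norm_mul_mem_unitary _ (exp_mem_unitary_of_mem_skewAdjoint (neg_mem hskew)),
        CStarRing.norm_mem_unitary_mul _ (exp_mem_unitary_of_mem_skewAdjoint hskew)]
    calc |t| * ‖⁅X, C⁆‖ = ‖(C + ((t : ℂ) * I) • ⁅X, C⁆) - C‖ := by
          simp [norm_smul]
      _ ≤ ‖C + ((t : ℂ) * I) • ⁅X, C⁆‖ + ‖C‖ := norm_sub_le _ _
      _ = 2 * ‖C‖ := by rw [hnorm]; ring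
  rw [commute_iff_lie_eq, ← norm_eq_zero]
  by_contra hD
  have := hbound ((2 * ‖C‖ + 1) / ‖⁅X, C⁆‖)
  rw [abs_of_nonneg (by positivity), div_mul_cancel₀ _ hD] at this
  linarith

theorem IsSelfAdjoint.commute_of_ad_pow_apply_eq_zero {X B : 𝔸} (hX : IsSelfAdjoint X) {k : ℕ}
    (h : (ad ℂ 𝔸 X ^ (k + 1)) B = 0) : Commute X B := by
  induction k with
  | zero => rwa [zero_add, pow_one, ad_apply, ← commute_iff_lie_eq] at h
  | succ k ih =>
    apply ih
    set C := (ad ℂ 𝔸 X ^ k) B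
    have hC : Commute X ⁅X, C⁆ := by
      rwa [pow_succ', pow_succ', Module.End.mul_apply, Module.End.mul_apply, ad_apply,
        ad_apply, ← commute_iff_lie_eq] at h
    rw [pow_succ', Module.End.mul_apply, ad_apply, ← commute_iff_lie_eq]
    exact hX.commute_of_commute_lie hC

theorem commute_of_ad_pow_bicommutant {S N B Y : 𝔸} {m s : ℕ} (hS : IsStarNormal S)
    (hSN : Commute S N) (hN : N ^ (m + 1) = 0) (hs : 2 * m + 1 ≤ s)
    (hcomm : ∀ X, Commute (S + N) X → Commute S X)
    (hB : ∀ X, (ad ℂ 𝔸 (S + N) ^ s) X = 0 → (ad ℂ 𝔸 X ^ s) B = 0)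
    (hY : Commute (S + N) Y) : Commute Y B := by
  obtain ⟨k, rfl⟩ : ∃ k, s = k + 1 := ⟨s - 1, by omega⟩
  have hSY : Commute S Y := hcomm Y hY
  have hSY' : Commute S (star Y) := by
    simpa using (hS.commute_star_left hSY).star_star
  have hselfAdjoint {X : 𝔸} (hX : IsSelfAdjoint X) (hSX : Commute S X) : Commute X B :=
    hX.commute_of_ad_pow_apply_eq_zero (hB X (ad_pow_add_apply_eq_zero hSN hSX hN (by omega)))
  rw [← realPart_add_I_smul_imaginaryPart Y]
  exact (hselfAdjoint (ℜ Y).2 (hSY.realPart_right hSY')).add_left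
    ((hselfAdjoint (ℑ Y).2 (hSY.imaginaryPart_right hSY')).smul_left _)

end CStarAlgebra

section HilbertSpace

variable {H : Type*} [NormedAddCommGroup H] [InnerProductSpace ℂ H] [CompleteSpace H]

theorem mem_sCentralizer_iff {s : ℕ} {T : Set (H →L[ℂ] H)} {X : H →L[ℂ] H} :
    X ∈ sCentralizer s T ↔ ∀ Y ∈ T, (ad ℂ (H →L[ℂ] H) Y ^ s) X = 0 := by
  simp only [Module.End.pow_apply]
  rfl

theorem sCentralizer_one (T : Set (H →L[ℂ] H)) : sCentralizer 1 T = Set.centralizer T := by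
  ext X
  simp [sCentralizer, Set.mem_centralizer_iff, sub_eq_zero]

end HilbertSpace

theorem stmt11 {H : Type*} [NormedAddCommGroup H] [InnerProductSpace ℂ H]
    [CompleteSpace H] (A S N : H →L[ℂ] H) (m : ℕ) (hA : A = S + N)
    (hS : S * star S = star S * S) (hN : N ^ (m + 1) = 0) (hSN : S * N = N * S)
    (hcomm : ∀ X : H →L[ℂ] H, A * X = X * A → S * X = X * S)
    (s : ℕ) (hs : 2 * m + 1 ≤ s) :
    sCentralizer s (sCentralizer s {A}) ⊆ sCentralizer 1 (sCentralizer 1 {A}) ∧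
      sCentralizer s (sCentralizer s {A}) ⊆ vN A := by
  subst hA
  have hbicommutant :
      sCentralizer s (sCentralizer s {S + N}) ⊆ Set.centralizer (Set.centralizer {S + N}) := by
    intro B hB Y hY
    refine commute_of_ad_pow_bicommutant ⟨hS.symm⟩ hSN hN hs hcomm (fun X hX => ?_) (hY _ rfl)
    exact mem_sCentralizer_iff.1 hB X (mem_sCentralizer_iff.2 (by simpa using hX))
  rw [sCentralizer_one, sCentralizer_one]
  exact ⟨hbicommutant,
    hbicommutant.trans (Set.centralizer_subset (Set.centralizer_subset (by simp)))⟩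
end

section
/- Let A be a bounded normal operator on a complex Hilbert space and X a bounded operator commuting with A. Then X commutes with A*, and writing X = Re X + i·Im X with Re X = (X+X*)/2 and Im X = (X-X*)/(2i), both Re X and Im X commute with A. -/
theorem stmt18 {H : Type*} [NormedAddCommGroup H] [InnerProductSpace ℂ H]
    [CompleteSpace H] (A X : H →L[ℂ] H) (hA : A * star A = star A * A)
    (hAX : A * X = X * A) :
    star A * X = X * star A ∧
      A * ((2 : ℂ)⁻¹ • (X + star X)) = ((2 : ℂ)⁻¹ • (X + star X)) * A ∧
      A * ((2 * Complex.I)⁻¹ • (X - star X)) = ((2 * Complex.I)⁻¹ • (X - star X)) * A := by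
  have hA_normal : IsStarNormal A := ⟨hA.symm⟩
  have hAstar_X : Commute (star A) X := hA_normal.commute_star_left hAX
  have hA_Xstar : Commute A (star X) := by simpa only [star_star] using hAstar_X.star_star
  exact ⟨hAstar_X, ((Commute.add_right hAX hA_Xstar).smul_right _).eq,
    ((Commute.sub_right hAX hA_Xstar).smul_right _).eq⟩
end
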